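/- Let T be a symmetric bilinear form on a real vector space V equipped with a symmetric bilinear form g of Lorentzian signature. If T(v,v) ≥ 0 for all v with g(v,v) = -1 and T(e₀,e₀) = 0 for some e₀ with g(e₀,e₀) = -1, then T(e₀,w) = 0 for every w with g(e₀,w) = 0. -/

import Mathlib

/-!
Move along the branch of the unit hyperbola `t ↦ cosh t • e₀ + sinh t • u` in the timelike plane
spanned by `e₀` and a unit spacelike `u ⟂ e₀`. It stays on the hyperboloid `g v v = -1`, so
`t ↦ T v v` is nonnegative and vanishes at `t = 0`; its derivative there, the mixed term
`T e₀ u + T u e₀`, must therefore vanish.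
-/

open Real

section Hyperbola

variable {V : Type*} [AddCommGroup V] [Module ℝ V]

theorem LinearMap.apply_cosh_smul_add_sinh_smul (B : V →ₗ[ℝ] V →ₗ[ℝ] ℝ) (e u : V) (t : ℝ) :
    B (cosh t • e + sinh t • u) (cosh t • e + sinh t • u) =
      cosh t ^ 2 * B e e + cosh t * sinh t * (B e u + B u e) + sinh t ^ 2 * B u u := by
  simp only [map_add, map_smul, LinearMap.add_apply, LinearMap.smul_apply, smul_eq_mul]
  ring

theorem LinearMap.apply_cosh_smul_add_sinh_smul_eq_neg_one (g : V →ₗ[ℝ] V →ₗ[ℝ] ℝ) {e u : V}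
    (he : g e e = -1) (heu : g e u = 0) (hue : g u e = 0) (hu : g u u = 1) (t : ℝ) :
    g (cosh t • e + sinh t • u) (cosh t • e + sinh t • u) = -1 := by
  rw [g.apply_cosh_smul_add_sinh_smul, he, heu, hue, hu]
  linear_combination (-1 : ℝ) * cosh_sq t

theorem hasDerivAt_cosh_sq_mul_add_cosh_mul_sinh_mul_add_sinh_sq_mul (p m q : ℝ) :
    HasDerivAt (fun t ↦ cosh t ^ 2 * p + cosh t * sinh t * m + sinh t ^ 2 * q) m 0 := by
  have hc := hasDerivAt_cosh (0 : ℝ)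
  have hs := hasDerivAt_sinh (0 : ℝ)
  exact ((((hc.pow 2).mul_const p).add ((hc.mul hs).mul_const m)).add
    ((hs.pow 2).mul_const q)).congr_deriv (by simp)

theorem LinearMap.apply_add_apply_eq_zero_of_nonneg_on_hyperbola (T : V →ₗ[ℝ] V →ₗ[ℝ] ℝ)
    {e u : V} (hnn : ∀ t : ℝ, 0 ≤ T (cosh t • e + sinh t • u) (cosh t • e + sinh t • u))
    (hTe : T e e = 0) : T e u + T u e = 0 := by
  have hmin : IsLocalMin (fun t : ℝ ↦ T (cosh t • e + sinh t • u) (cosh t • e + sinh t • u)) 0 :=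
    Filter.Eventually.of_forall fun t ↦ by simpa [hTe] using hnn t
  simp only [T.apply_cosh_smul_add_sinh_smul] at hmin
  exact hmin.hasDerivAt_eq_zero (hasDerivAt_cosh_sq_mul_add_cosh_mul_sinh_mul_add_sinh_sq_mul _ _ _)

end Hyperbola

/-- If a symmetric bilinear form `T` on a Lorentzian vector space `(V, g)`
satisfies `T(v,v) ≥ 0` for all unit timelike `v` and vanishes on some unit timelike `e₀`,
then `T(e₀, w) = 0` for every `w` orthogonal to `e₀`.  The Lorentzian signature is
encoded by positive-definiteness of `g` on the orthogonal complement of the unit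
timelike vector `e₀`. -/
theorem stmt0 {V : Type*} [AddCommGroup V] [Module ℝ V]
    (g T : V →ₗ[ℝ] V →ₗ[ℝ] ℝ)
    (hgsymm : ∀ v w, g v w = g w v)
    (hTsymm : ∀ v w, T v w = T w v)
    (e₀ : V) (he₀ : g e₀ e₀ = -1)
    (hpos : ∀ w, g e₀ w = 0 → w ≠ 0 → 0 < g w w)
    (hnn : ∀ v, g v v = -1 → 0 ≤ T v v)
    (hT0 : T e₀ e₀ = 0) :
    ∀ w, g e₀ w = 0 → T e₀ w = 0 := by
  intro w hw
  rcases eq_or_ne w 0 with rfl | hw0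
  · simp
  have hc : 0 < g w w := hpos w hw hw0
  set u := (√(g w w))⁻¹ • w
  have heu : g e₀ u = 0 := by simp [u, hw]
  have hue : g u e₀ = 0 := by rw [← hgsymm, heu]
  have hu : g u u = 1 := by
    simp only [u, map_smul, LinearMap.smul_apply, smul_eq_mul, ← mul_assoc, ← mul_inv,
      mul_self_sqrt hc.le]
    exact inv_mul_cancel₀ hc.ne'
  have hmixed := T.apply_add_apply_eq_zero_of_nonneg_on_hyperbola
    (fun t ↦ hnn _ (g.apply_cosh_smul_add_sinh_smul_eq_neg_one he₀ heu hue hu t)) hT0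
  have hTu : T e₀ u = 0 := by linarith [hTsymm u e₀]
  simpa [u, (sqrt_pos.mpr hc).ne'] using hTu
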